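/- For distinct ω, σ ∈ (0, π), lim_{n→∞} (1/(n+1)) Σ_{k=0}^{n} P^T_k(ω) P^T_k(σ) = 0, where P^T_n are the rescaled orthonormal Chebyshev polynomials; consequently the functions √2 sin(ωt) for ω ∈ (0,π) are pairwise orthogonal under the Cesàro-type inner product ⟨f,g⟩ = lim_n (1/(n+1)) Σ_{k=0}^{n} K^k[f](t) K^k[g](t). -/

import Mathlib

open Filter Real

/-- The chromatic derivatives associated with recursion coefficients `γ`. -/
noncomputable def chromDeriv (γ : ℕ → ℝ) : ℕ → (ℝ → ℝ) → (ℝ → ℝ)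
  | 0, f => f
  | 1, f => fun t => (1 / γ 0) * deriv f t
  | (n + 2), f => fun t =>
      (1 / γ (n + 1)) * deriv (chromDeriv γ (n + 1) f) t +
        (γ n / γ (n + 1)) * chromDeriv γ n f t

/-- The rescaled orthonormal Chebyshev polynomials: `P^T_0 = 1`,
`P^T_n(ω) = √2 T_n(ω/π)` for `n > 0`. -/
noncomputable def chebP (n : ℕ) (ω : ℝ) : ℝ :=
  if n = 0 then 1
  else Real.sqrt 2 * (Polynomial.Chebyshev.T ℝ (n : ℤ)).eval (ω / Real.pi)

/-- Recursion coefficients of the rescaled Chebyshev polynomials: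
`γ_0 = π/√2`, `γ_n = π/2` for `n > 0`. -/
noncomputable def chebGamma (n : ℕ) : ℝ :=
  if n = 0 then Real.pi / Real.sqrt 2 else Real.pi / 2

/-!
Write `ω = π cos θ`, `σ = π cos φ` with `θ, φ ∈ [0, π]`. For `k ≥ 1`,
`P_k(ω) P_k(σ) = cos (k(θ - φ)) + cos (k(θ + φ))`, and the partial sums of `cos (kα)` are bounded
by `1 / |sin (α/2)|` (Dirichlet kernel), so the Cesàro means vanish in the limit once `θ ≠ φ`.

The three-term recurrence gives `K^k[√2 sin (ω ·)](t) = P_k(ω) √2 sin (ωt + kπ/2)`, so the `k`-th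
product of chromatic derivatives is `cos ((ω-σ)t) P_k(ω) P_k(σ) - cos ((ω+σ)t) P_k(-ω) P_k(σ)`,
because `(-1)^k P_k(ω) = P_k(-ω)`. The first part, applied to `(ω, σ)` and `(-ω, σ)`, finishes.
-/

open Finset Set Topology

noncomputable def cesaroMean (a : ℕ → ℝ) (n : ℕ) : ℝ :=
  (1 / ((n : ℝ) + 1)) * ∑ k ∈ range (n + 1), a k

section cesaroMean

variable (a b : ℕ → ℝ) (n : ℕ)

lemma cesaroMean_add : cesaroMean (fun k => a k + b k) n = cesaroMean a n + cesaroMean b n := by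
  simp only [cesaroMean, sum_add_distrib, mul_add]

lemma cesaroMean_sub : cesaroMean (fun k => a k - b k) n = cesaroMean a n - cesaroMean b n := by
  simp only [cesaroMean, sum_sub_distrib, mul_sub]

lemma cesaroMean_const_mul (c : ℝ) :
    cesaroMean (fun k => c * a k) n = c * cesaroMean a n := by
  simp only [cesaroMean, ← mul_sum]
  ring

end cesaroMean

lemma tendsto_cesaroMean_zero_of_abs_sum_range_le {a : ℕ → ℝ} {C : ℝ}
    (h : ∀ n, |∑ k ∈ range n, a k| ≤ C) : Tendsto (cesaroMean a) atTop (𝓝 0) := by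
  refine squeeze_zero_norm (a := fun n : ℕ => C * (1 / ((n : ℝ) + 1))) (fun n => ?_) ?_
  · have hn : (0 : ℝ) < 1 / ((n : ℝ) + 1) := by positivity
    rw [cesaroMean, norm_mul, Real.norm_eq_abs, Real.norm_eq_abs, abs_of_pos hn, mul_comm C]
    exact mul_le_mul_of_nonneg_left (h (n + 1)) hn.le
  · simpa using tendsto_one_div_add_atTop_nhds_zero_nat.const_mul C

lemma two_mul_sin_half_mul_sum_range_cos (α : ℝ) (n : ℕ) :
    2 * sin (α / 2) * ∑ k ∈ range n, cos (k * α) = sin ((n - 1 / 2) * α) + sin (α / 2) := by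
  induction n with
  | zero =>
    simp only [sum_range_zero, mul_zero, CharP.cast_eq_zero, zero_sub, neg_mul, sin_neg]
    ring_nf
  | succ n ih =>
    have hlo : ((n : ℝ) - 1 / 2) * α = n * α - α / 2 := by ring
    have hhi : ((n + 1 : ℕ) - 1 / 2 : ℝ) * α = n * α + α / 2 := by push_cast; ring
    rw [sum_range_succ, mul_add, ih, hlo, hhi, sin_sub, sin_add]
    ring

lemma abs_sum_range_cos_mul_le {α : ℝ} (hα : sin (α / 2) ≠ 0) (n : ℕ) :
    |∑ k ∈ range n, cos (k * α)| ≤ 1 / |sin (α / 2)| := by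
  have hbound : |2 * sin (α / 2) * ∑ k ∈ range n, cos (k * α)| ≤ 2 := by
    rw [two_mul_sin_half_mul_sum_range_cos]
    linarith [abs_add_le (sin ((n - 1 / 2) * α)) (sin (α / 2)),
      abs_sin_le_one ((n - 1 / 2) * α), abs_sin_le_one (α / 2)]
  rw [abs_mul, abs_mul, abs_two] at hbound
  rw [le_div_iff₀ (abs_pos.2 hα)]
  linarith

lemma tendsto_cesaroMean_cos_mul {α : ℝ} (hα : sin (α / 2) ≠ 0) :
    Tendsto (cesaroMean fun k => cos (k * α)) atTop (𝓝 0) :=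
  tendsto_cesaroMean_zero_of_abs_sum_range_le (abs_sum_range_cos_mul_le hα)

lemma tendsto_cesaroMean_ite_eq_zero :
    Tendsto (cesaroMean fun k => if k = 0 then 1 else 0) atTop (𝓝 0) := by
  refine tendsto_cesaroMean_zero_of_abs_sum_range_le (C := 1) fun n => ?_
  rw [sum_ite_eq' (range n) 0 (fun _ => (1 : ℝ))]
  split_ifs <;> norm_num

section chromDeriv

variable {γ P : ℕ → ℝ} {ω : ℝ}

/-- The real form of `K^k[e^{iωt}] = i^k P_k(ω) e^{iωt}`. The recurrence
`ω P_{n+1} = γ_n P_n + γ_{n+1} P_{n+2}` is assumed solved for `P_{n+2}`, with the same junk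
division as in `chromDeriv`, so no `γ n ≠ 0` is needed. -/
theorem chromDeriv_const_mul_sin (h0 : P 0 = 1) (h1 : P 1 = ω / γ 0)
    (hrec : ∀ n, P (n + 2) = (ω * P (n + 1) - γ n * P n) / γ (n + 1)) (a : ℝ) (k : ℕ) :
    chromDeriv γ k (fun s => a * sin (ω * s)) =
      fun t => P k * (a * sin (ω * t + k * (π / 2))) := by
  induction k using Nat.twoStepInduction with
  | zero => simp [chromDeriv, h0]
  | one =>
    funext t
    have hd : HasDerivAt (fun s => a * sin (ω * s)) (a * (cos (ω * t) * (ω * 1))) t :=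
      (((hasDerivAt_id t).const_mul ω).sin).const_mul a
    simp only [chromDeriv, hd.deriv, h1, Nat.cast_one, one_mul, sin_add_pi_div_two]
    ring
  | more n ih₀ ih₁ =>
    funext t
    set x := ω * t + n * (π / 2)
    have hd : HasDerivAt (fun s => P (n + 1) * (a * sin (ω * s + (n + 1 : ℕ) * (π / 2))))
        (P (n + 1) * (a * (cos (ω * t + (n + 1 : ℕ) * (π / 2)) * (ω * 1)))) t :=
      ((((hasDerivAt_id t).const_mul ω).add_const _).sin.const_mul a).const_mul _
    have hx₁ : ω * t + (n + 1 : ℕ) * (π / 2) = x + π / 2 := by push_cast; ring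
    have hx₂ : ω * t + (n + 2 : ℕ) * (π / 2) = x + π := by push_cast; ring
    simp only [chromDeriv, ih₀, ih₁, hd.deriv, hx₁, hx₂, cos_add_pi_div_two, sin_add_pi, hrec]
    ring

end chromDeriv

lemma chebGamma_zero : chebGamma 0 = π / √2 := if_pos rfl

lemma chebGamma_succ (n : ℕ) : chebGamma (n + 1) = π / 2 := if_neg n.succ_ne_zero

lemma chebP_zero (ω : ℝ) : chebP 0 ω = 1 := if_pos rfl

lemma chebP_of_ne_zero {k : ℕ} (hk : k ≠ 0) (ω : ℝ) :
    chebP k ω = √2 * (Polynomial.Chebyshev.T ℝ k).eval (ω / π) := if_neg hk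

lemma chebP_one (ω : ℝ) : chebP 1 ω = ω / chebGamma 0 := by
  rw [chebP_of_ne_zero one_ne_zero, chebGamma_zero]
  simp only [Nat.cast_one, Polynomial.Chebyshev.T_one, Polynomial.eval_X]
  field_simp

lemma chebP_add_two (n : ℕ) (ω : ℝ) :
    chebP (n + 2) ω = (ω * chebP (n + 1) ω - chebGamma n * chebP n ω) / chebGamma (n + 1) := by
  rw [chebP_of_ne_zero (by omega), chebP_of_ne_zero (by omega), chebGamma_succ]
  cases n with
  | zero =>
    simp only [chebP_zero, chebGamma_zero]
    norm_num [Polynomial.Chebyshev.T_two]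
    field_simp
    ring_nf
    rw [sq_sqrt zero_le_two]
    ring
  | succ m =>
    rw [chebP_of_ne_zero (by omega), chebGamma_succ]
    have hT := congrArg (Polynomial.eval (ω / π)) (Polynomial.Chebyshev.T_add_two ℝ ((m : ℤ) + 1))
    simp only [Polynomial.eval_mul, Polynomial.eval_sub, Polynomial.eval_ofNat,
      Polynomial.eval_X] at hT
    push_cast
    rw [hT]
    field_simp

lemma chebP_neg (k : ℕ) (ω : ℝ) : chebP k (-ω) = (-1) ^ k * chebP k ω := by
  rcases eq_or_ne k 0 with rfl | hk
  · simp [chebP_zero]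
  · rw [chebP_of_ne_zero hk, chebP_of_ne_zero hk, neg_div, Polynomial.Chebyshev.T_eval_neg,
      Int.cast_negOnePow_natCast]
    ring

lemma chebP_pi_mul_cos {k : ℕ} (hk : k ≠ 0) (θ : ℝ) : chebP k (π * cos θ) = √2 * cos (k * θ) := by
  rw [chebP_of_ne_zero hk, mul_div_cancel_left₀ _ pi_ne_zero, Polynomial.Chebyshev.T_real_cos]
  norm_cast

lemma chebP_pi_mul_cos_mul_chebP_pi_mul_cos (θ φ : ℝ) (k : ℕ) :
    chebP k (π * cos θ) * chebP k (π * cos φ) =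
      cos (k * (θ - φ)) + cos (k * (θ + φ)) - if k = 0 then 1 else 0 := by
  rcases eq_or_ne k 0 with rfl | hk
  · simp [chebP_zero]
  · rw [chebP_pi_mul_cos hk, chebP_pi_mul_cos hk, if_neg hk, mul_sub, mul_add, cos_sub, cos_add]
    linear_combination cos (k * θ) * cos (k * φ) * mul_self_sqrt zero_le_two

lemma tendsto_cesaroMean_chebP_pi_mul_cos {θ φ : ℝ} (hdiff : sin ((θ - φ) / 2) ≠ 0)
    (hsum : sin ((θ + φ) / 2) ≠ 0) :
    Tendsto (cesaroMean fun k => chebP k (π * cos θ) * chebP k (π * cos φ)) atTop (𝓝 0) := by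
  simp_rw [chebP_pi_mul_cos_mul_chebP_pi_mul_cos]
  have := ((tendsto_cesaroMean_cos_mul hdiff).add (tendsto_cesaroMean_cos_mul hsum)).sub
    tendsto_cesaroMean_ite_eq_zero
  rw [add_zero, sub_zero] at this
  exact this.congr fun n => by rw [← cesaroMean_add, ← cesaroMean_sub]

theorem tendsto_cesaroMean_chebP_mul_chebP {ω σ : ℝ} (hω : ω ∈ Icc (-π) π)
    (hσ : σ ∈ Icc (-π) π) (hne : ω ≠ σ) :
    Tendsto (cesaroMean fun k => chebP k ω * chebP k σ) atTop (𝓝 0) := by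
  have hπ := pi_pos
  have hcos {x : ℝ} (hx : x ∈ Icc (-π) π) : π * cos (arccos (x / π)) = x := by
    rw [cos_arccos (by rw [le_div_iff₀ hπ]; linarith [hx.1]) (by rw [div_le_one hπ]; exact hx.2)]
    field_simp
  set θ := arccos (ω / π)
  set φ := arccos (σ / π)
  have hωθ : π * cos θ = ω := hcos hω
  have hσφ : π * cos φ = σ := hcos hσ
  have hθφ : θ ≠ φ := fun h => hne (by rw [← hωθ, ← hσφ, h])
  have hθ : θ ∈ Icc 0 π := ⟨arccos_nonneg _, arccos_le_pi _⟩
  have hφ : φ ∈ Icc 0 π := ⟨arccos_nonneg _, arccos_le_pi _⟩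
  rw [← hωθ, ← hσφ]
  refine tendsto_cesaroMean_chebP_pi_mul_cos ?_ ?_
  · rw [Ne, sin_eq_zero_iff_of_lt_of_lt (by linarith [hθ.1, hφ.2]) (by linarith [hθ.2, hφ.1])]
    exact fun h => hθφ (by linarith)
  · refine (sin_pos_of_pos_of_lt_pi ?_ ?_).ne' <;>
      rcases hθφ.lt_or_gt with h | h <;> linarith [hθ.1, hθ.2, hφ.1, hφ.2]

lemma two_mul_sin_add_nat_mul_pi_div_two_mul_sin (x y : ℝ) (k : ℕ) :
    2 * sin (x + k * (π / 2)) * sin (y + k * (π / 2)) = cos (x - y) - (-1) ^ k * cos (x + y) := by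
  rw [← cos_add_nat_mul_pi, two_mul_sin_mul_sin]
  ring_nf

lemma chromDeriv_chebGamma_sqrt_two_mul_sin_mul (ω σ t : ℝ) (k : ℕ) :
    chromDeriv chebGamma k (fun s => √2 * sin (ω * s)) t *
        chromDeriv chebGamma k (fun s => √2 * sin (σ * s)) t =
      cos ((ω - σ) * t) * (chebP k ω * chebP k σ) -
        cos ((ω + σ) * t) * (chebP k (-ω) * chebP k σ) := by
  rw [chromDeriv_const_mul_sin (P := (chebP · ω)) (chebP_zero ω) (chebP_one ω)
      (chebP_add_two · ω),
    chromDeriv_const_mul_sin (P := (chebP · σ)) (chebP_zero σ) (chebP_one σ)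
      (chebP_add_two · σ),
    chebP_neg, sub_mul, add_mul]
  linear_combination chebP k ω * chebP k σ * sin (ω * t + k * (π / 2)) *
      sin (σ * t + k * (π / 2)) * mul_self_sqrt zero_le_two +
    chebP k ω * chebP k σ * two_mul_sin_add_nat_mul_pi_div_two_mul_sin (ω * t) (σ * t) k

/-- For distinct `ω, σ ∈ (0,π)` the Cesàro averages
`(1/(n+1)) Σ_{k≤n} P^T_k(ω) P^T_k(σ)` tend to `0`; consequently the functions
`√2 sin(ωt)` for `ω ∈ (0,π)` are pairwise orthogonal under the inner product
`⟨f,g⟩ = lim_n (1/(n+1)) Σ_{k≤n} K^k[f](t) K^k[g](t)` (for every `t`). -/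
theorem chebP_orthogonality_cesaro
    (ω σ : ℝ) (hω : ω ∈ Set.Ioo 0 Real.pi) (hσ : σ ∈ Set.Ioo 0 Real.pi)
    (hne : ω ≠ σ) :
    Tendsto
      (fun n : ℕ =>
        (1 / ((n : ℝ) + 1)) *
          ∑ k ∈ Finset.range (n + 1), chebP k ω * chebP k σ)
      atTop (nhds 0) ∧
    ∀ t : ℝ,
      Tendsto
        (fun n : ℕ =>
          (1 / ((n : ℝ) + 1)) *
            ∑ k ∈ Finset.range (n + 1),
              chromDeriv chebGamma k (fun s => Real.sqrt 2 * Real.sin (ω * s)) t *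
                chromDeriv chebGamma k (fun s => Real.sqrt 2 * Real.sin (σ * s)) t)
        atTop (nhds 0) := by
  have hπ := pi_pos
  have hωI : ω ∈ Icc (-π) π := ⟨by linarith [hω.1], hω.2.le⟩
  have hσI : σ ∈ Icc (-π) π := ⟨by linarith [hσ.1], hσ.2.le⟩
  have hnegωI : -ω ∈ Icc (-π) π := ⟨by linarith [hω.2], by linarith [hω.1]⟩
  have hneg : -ω ≠ σ := fun h => by linarith [hω.1, hσ.1]
  have hsame := tendsto_cesaroMean_chebP_mul_chebP hωI hσI hne
  have hopp := tendsto_cesaroMean_chebP_mul_chebP hnegωI hσI hneg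
  refine ⟨hsame, fun t => ?_⟩
  show Tendsto (cesaroMean fun k => _) atTop (𝓝 0)
  rw [funext (chromDeriv_chebGamma_sqrt_two_mul_sin_mul ω σ t)]
  have := (hsame.const_mul (cos ((ω - σ) * t))).sub (hopp.const_mul (cos ((ω + σ) * t)))
  rw [mul_zero, mul_zero, sub_zero] at this
  exact this.congr fun n => by
    rw [← cesaroMean_const_mul, ← cesaroMean_const_mul, ← cesaroMean_sub]
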